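/- arXiv:2508.14244 — 3 statements merged into one kernel-verified Lean document; each statement's English description precedes it below -/
import Mathlib

section
/- Let X be a connected, locally connected, locally compact Hausdorff topological space and let K ⊆ X be a compact subset. Then only finitely many connected components of X ∖ K have noncompact closure in X. -/
/-- A preconnected set meeting both a set and its complement meets its frontier. -/
lemma aux_preconnected_frontier {X : Type*} [TopologicalSpace X] {C s : Set X}
    (hC : IsPreconnected C) (h1 : (C ∩ s).Nonempty) (h2 : (C ∩ sᶜ).Nonempty) :
    (C ∩ frontier s).Nonempty := by
  by_contra h
  rw [Set.not_nonempty_iff_eq_empty] at h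
  have hsub : C ⊆ interior s ∪ (closure s)ᶜ := by
    intro z hz
    rcases em (z ∈ closure s) with hzc | hzc
    · left
      by_contra hzi
      exact absurd (Set.eq_empty_iff_forall_notMem.mp h z ⟨hz, hzc, hzi⟩) not_false
    · exact Or.inr hzc
  have hu1 : (C ∩ interior s).Nonempty := by
    obtain ⟨z, hzC, hzs⟩ := h1
    refine ⟨z, hzC, ?_⟩
    have hzc : z ∈ closure s := subset_closure hzs
    by_contra hzi
    exact absurd (Set.eq_empty_iff_forall_notMem.mp h z ⟨hzC, hzc, hzi⟩) not_false
  have hu2 : (C ∩ (closure s)ᶜ).Nonempty := by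
    obtain ⟨z, hzC, hzs⟩ := h2
    refine ⟨z, hzC, ?_⟩
    intro hzc
    by_cases hzi : z ∈ interior s
    · exact hzs (interior_subset hzi)
    · exact absurd (Set.eq_empty_iff_forall_notMem.mp h z ⟨hzC, hzc, hzi⟩) not_false
  obtain ⟨z, _, hzi, hzc⟩ := hC (interior s) (closure s)ᶜ isOpen_interior
    isClosed_closure.isOpen_compl hsub hu1 hu2
  exact hzc (subset_closure (interior_subset hzi))

/-- Let `X` be a connected, locally connected, locally compact Hausdorff space and let
`K ⊆ X` be compact. Then only finitely many connected components of `X \ K` have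
noncompact closure in `X`. -/
theorem finite_unbounded_components {X : Type*} [TopologicalSpace X]
    [ConnectedSpace X] [LocallyConnectedSpace X] [LocallyCompactSpace X] [T2Space X]
    (K : Set X) (hK : IsCompact K) :
    {C : Set X | (∃ x ∈ Kᶜ, C = connectedComponentIn Kᶜ x) ∧
      ¬ IsCompact (closure C)}.Finite := by
  -- choose a point of X and a compact neighborhood of it
  obtain ⟨x₀⟩ : Nonempty X := inferInstance
  obtain ⟨N, hNc, hN⟩ := exists_compact_mem_nhds x₀
  -- choose a compact superset L of K with K ⊆ interior L, and make it nonempty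
  obtain ⟨L₀, hL₀c, hKL₀⟩ := exists_compact_superset hK
  set L : Set X := L₀ ∪ N with hLdef
  have hLc : IsCompact L := hL₀c.union hNc
  have hKintL : K ⊆ interior L := hKL₀.trans (interior_mono Set.subset_union_left)
  have hLne : L.Nonempty := ⟨x₀, Or.inr (mem_of_mem_nhds hN)⟩
  have hLclosed : IsClosed L := hLc.isClosed
  have hKopen : IsOpen Kᶜ := hK.isClosed.isOpen_compl
  -- the frontier of L is compact and disjoint from K
  have hFc : IsCompact (frontier L) :=
    hLc.of_isClosed_subset isClosed_frontier (hLclosed.frontier_subset)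
  have hFK : frontier L ⊆ Kᶜ := by
    intro y hy
    intro hyK
    exact hy.2 (interior_mono (Set.subset_union_left) (hKL₀ hyK))
  -- cover the frontier by finitely many components of Kᶜ
  have hcover : frontier L ⊆ ⋃ y ∈ frontier L, connectedComponentIn Kᶜ y := by
    intro y hy
    exact Set.mem_biUnion hy (mem_connectedComponentIn (hFK hy))
  obtain ⟨t, htF, htfin, htcover⟩ := hFc.elim_finite_subcover_image
    (fun y _ => hKopen.connectedComponentIn) hcover
  -- every unbounded component is one of the finitely many covering components
  apply Set.Finite.subset (htfin.image (fun y => connectedComponentIn Kᶜ y))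
  rintro C ⟨⟨x, hxK, rfl⟩, hCnc⟩
  set C := connectedComponentIn Kᶜ x with hCdef
  have hCopen : IsOpen C := hKopen.connectedComponentIn
  have hCsub : C ⊆ Kᶜ := connectedComponentIn_subset _ _
  have hxC : x ∈ C := mem_connectedComponentIn hxK
  have hCconn : IsPreconnected C := isPreconnected_connectedComponentIn
  -- closure C ⊆ C ∪ K
  have hclCK : closure C ⊆ C ∪ K := by
    intro z hz
    by_cases hzK : z ∈ K
    · exact Or.inr hzK
    · left
      have hzc : z ∈ connectedComponentIn Kᶜ z := mem_connectedComponentIn hzK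
      have hopen : IsOpen (connectedComponentIn Kᶜ z) := hKopen.connectedComponentIn
      obtain ⟨w, hwz, hwC⟩ := mem_closure_iff.mp hz _ hopen hzc
      have h1 : connectedComponentIn Kᶜ z = connectedComponentIn Kᶜ w :=
        connectedComponentIn_eq hwz
      have h2 : connectedComponentIn Kᶜ x = connectedComponentIn Kᶜ w :=
        connectedComponentIn_eq hwC
      rw [hCdef, h2, ← h1]
      exact hzc
  -- C meets L
  have hCL : (C ∩ L).Nonempty := by
    by_contra h
    rw [Set.not_nonempty_iff_eq_empty] at h
    have hCLc : C ⊆ Lᶜ := fun z hz hzL =>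
      absurd (Set.eq_empty_iff_forall_notMem.mp h z ⟨hz, hzL⟩) not_false
    have hclC : closure C ⊆ C := by
      intro z hz
      rcases hclCK hz with h1 | h1
      · exact h1
      · exfalso
        have hsub : C ⊆ (interior L)ᶜ := hCLc.trans (Set.compl_subset_compl.mpr interior_subset)
        have hcl : closure C ⊆ (interior L)ᶜ :=
          closure_minimal hsub isOpen_interior.isClosed_compl
        exact hcl hz (hKintL h1)
    have hCclosed : IsClosed C := closure_subset_iff_isClosed.mp hclC
    have : C = Set.univ := (isClopen_iff.mp ⟨hCclosed, hCopen⟩).resolve_left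
      (Set.nonempty_iff_ne_empty.mp ⟨x, hxC⟩)
    obtain ⟨p, hp⟩ := hLne
    exact absurd (Set.eq_empty_iff_forall_notMem.mp h p ⟨this ▸ Set.mem_univ p, hp⟩) not_false
  -- C meets Lᶜ, since otherwise closure C would be compact
  have hCLc : (C ∩ Lᶜ).Nonempty := by
    by_contra h
    rw [Set.not_nonempty_iff_eq_empty] at h
    have hCsubL : C ⊆ L := fun z hz => by
      by_contra hzL
      exact absurd (Set.eq_empty_iff_forall_notMem.mp h z ⟨hz, hzL⟩) not_false
    exact hCnc (hLc.of_isClosed_subset isClosed_closure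
      ((closure_mono hCsubL).trans hLclosed.closure_eq.subset))
  -- hence C meets the frontier of L
  obtain ⟨z, hzC, hzF⟩ := aux_preconnected_frontier hCconn hCL hCLc
  obtain ⟨y, hyt, hzy⟩ := Set.mem_iUnion₂.mp (htcover hzF)
  refine ⟨y, hyt, ?_⟩
  have h1 : connectedComponentIn Kᶜ y = connectedComponentIn Kᶜ z :=
    connectedComponentIn_eq hzy
  have h2 : connectedComponentIn Kᶜ x = connectedComponentIn Kᶜ z :=
    connectedComponentIn_eq hzC
  show connectedComponentIn Kᶜ y = C
  rw [hCdef, h1, ← h2]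
end

section
/- Let X be a connected, locally connected, locally compact Hausdorff topological space. Define the end space Ends(X) as the set of functions e assigning to each compact subset K ⊆ X a connected component e(K) of X ∖ K whose closure in X is not compact, subject to the compatibility condition that e(K′) ⊆ e(K) whenever K ⊆ K′; topologize Ends(X) as a subspace of the product ∏_{K compact} (Set X), where each factor Set X carries the discrete topology. Then Ends(X) is a compact, Hausdorff, totally disconnected topological space; if moreover X is second countable, then Ends(X) is second countable. -/
/-!
Inside the product of the discrete spaces `Set X`, the ends are cut out by conditions on one or
two coordinates each, so they form a closed subset of `∏_K {unbounded components of X \ K}`.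
Each factor is finite: an unbounded component of `X \ K` is connected, touches `K` and leaves
every compact neighbourhood `K'` of `K`, so it meets the compact set `frontier K'`, which is
covered by finitely many of the open components. Tychonoff's theorem gives compactness, and
Hausdorffness and total disconnectedness pass from the product to the subspace. An end is
determined by its values on a compact exhaustion `(Kₙ)`, which embeds the compact space of ends
into the second countable Hausdorff space `∏ₙ {unbounded components of X \ Kₙ}`.
-/

variable (X : Type*) [TopologicalSpace X]

/-- `C` is a connected component of `X \ K` whose closure in `X` is not compact. -/
def IsUnboundedComponent (K C : Set X) : Prop :=
  (∃ x ∈ Kᶜ, C = connectedComponentIn Kᶜ x) ∧ ¬ IsCompact (closure C)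

/-- The space of ends of `X`: compatible assignments, to each compact `K ⊆ X`, of an
unbounded connected component of `X \ K`. -/
def Ends : Type _ :=
  {e : {K : Set X // IsCompact K} → Set X //
    (∀ K : {K : Set X // IsCompact K}, IsUnboundedComponent X K.1 (e K)) ∧
    (∀ K K' : {K : Set X // IsCompact K}, K.1 ⊆ K'.1 → e K' ⊆ e K)}

/-- Topologize `Ends X` as a subspace of the product `∏_{K compact} (Set X)`, where each
factor `Set X` carries the discrete topology. -/
instance : TopologicalSpace (Ends X) :=
  TopologicalSpace.induced (Subtype.val : Ends X → ({K : Set X // IsCompact K} → Set X))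
    (@Pi.topologicalSpace _ (fun _ => Set X) (fun _ => ⊥))

open Topology

variable {X}

theorem IsPreconnected.inter_frontier_nonempty {s t : Set X} (hs : IsPreconnected s)
    (hst : (s ∩ t).Nonempty) (hst' : (s \ t).Nonempty) : (s ∩ frontier t).Nonempty := by
  by_contra h
  have hcover : s ⊆ interior t ∪ (closure t)ᶜ := fun x hx => by
    by_contra hx'
    simp only [Set.mem_union, Set.mem_compl_iff, not_or, not_not] at hx'
    exact h ⟨x, hx, hx'.2, hx'.1⟩
  have hdisj : Disjoint (interior t) (closure t)ᶜ :=
    Set.disjoint_compl_right_iff_subset.mpr (interior_subset.trans subset_closure)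
  rcases hs.subset_or_subset isOpen_interior isClosed_closure.isOpen_compl hdisj hcover
    with hint | hext
  · obtain ⟨x, hxs, hxt⟩ := hst'
    exact hxt (interior_subset (hint hxs))
  · obtain ⟨x, hxs, hxt⟩ := hst
    exact hext hxs (subset_closure hxt)

theorem closure_connectedComponentIn_compl_inter_nonempty [PreconnectedSpace X]
    [LocallyConnectedSpace X] {K : Set X} (hK : IsClosed K) (hKne : K.Nonempty) {x : X}
    (hx : x ∈ Kᶜ) : (closure (connectedComponentIn Kᶜ x) ∩ K).Nonempty := by
  by_contra h
  have hcl : closure (connectedComponentIn Kᶜ x) ⊆ connectedComponentIn Kᶜ x :=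
    isPreconnected_connectedComponentIn.closure.subset_connectedComponentIn
      (subset_closure (mem_connectedComponentIn hx))
      (Set.disjoint_iff_inter_eq_empty.mpr
        (Set.not_nonempty_iff_eq_empty.mp h)).subset_compl_right
  have hclopen : IsClopen (connectedComponentIn Kᶜ x) :=
    ⟨closure_subset_iff_isClosed.mp hcl, hK.isOpen_compl.connectedComponentIn⟩
  obtain ⟨k, hk⟩ := hKne
  have hsub := hclopen.eq_univ ⟨x, mem_connectedComponentIn hx⟩ ▸ connectedComponentIn_subset Kᶜ x
  exact hsub (Set.mem_univ k) hk

theorem IsCompact.finite_image_connectedComponentIn [LocallyConnectedSpace X] {U L : Set X}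
    (hU : IsOpen U) (hL : IsCompact L) (hLU : L ⊆ U) : (connectedComponentIn U '' L).Finite := by
  obtain ⟨t, ht⟩ := hL.elim_finite_subcover (fun y : U => connectedComponentIn U y)
    (fun _ => hU.connectedComponentIn)
    (fun z hz => Set.mem_iUnion.mpr ⟨⟨z, hLU hz⟩, mem_connectedComponentIn (hLU hz)⟩)
  refine (t.finite_toSet.image fun y : U => connectedComponentIn U y).subset ?_
  rintro _ ⟨z, hz, rfl⟩
  obtain ⟨y, hy, hzy⟩ := Set.mem_iUnion₂.mp (ht hz)
  exact ⟨y, hy, connectedComponentIn_eq hzy⟩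

namespace IsUnboundedComponent

variable {K C : Set X}

theorem nonempty (hC : IsUnboundedComponent X K C) : C.Nonempty :=
  Set.nonempty_iff_ne_empty.mpr fun h => hC.2 (by simp [h])

theorem eq_connectedComponentIn (hC : IsUnboundedComponent X K C) {z : X} (hz : z ∈ C) :
    C = connectedComponentIn Kᶜ z := by
  obtain ⟨⟨x, -, rfl⟩, -⟩ := hC
  exact connectedComponentIn_eq hz

theorem eq_of_not_disjoint {C' : Set X} (hC : IsUnboundedComponent X K C)
    (hC' : IsUnboundedComponent X K C') (h : ¬ Disjoint C C') : C = C' := by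
  obtain ⟨z, hz, hz'⟩ := Set.not_disjoint_iff.mp h
  rw [hC.eq_connectedComponentIn hz, hC'.eq_connectedComponentIn hz']

theorem not_subset_of_isCompact [R1Space X] {K' : Set X} (hC : IsUnboundedComponent X K C)
    (hK' : IsCompact K') : ¬ C ⊆ K' :=
  fun h => hC.2 (hK'.closure_of_subset h)

theorem inter_frontier_nonempty [PreconnectedSpace X] [LocallyConnectedSpace X] [R1Space X]
    {K' : Set X} (hC : IsUnboundedComponent X K C) (hK : IsClosed K) (hKne : K.Nonempty)
    (hK' : IsCompact K') (hKK' : K ⊆ interior K') : (C ∩ frontier K').Nonempty := by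
  have hescape := Set.not_subset.mp (hC.not_subset_of_isCompact hK')
  obtain ⟨⟨x, hx, rfl⟩, -⟩ := hC
  obtain ⟨y, hyC, hyK⟩ := closure_connectedComponentIn_compl_inter_nonempty hK hKne hx
  obtain ⟨z, hzK', hzC⟩ := mem_closure_iff.mp hyC _ isOpen_interior (hKK' hyK)
  exact isPreconnected_connectedComponentIn.inter_frontier_nonempty
    ⟨z, hzC, interior_subset hzK'⟩ hescape

end IsUnboundedComponent

theorem finite_setOf_isUnboundedComponent [PreconnectedSpace X] [LocallyConnectedSpace X]
    [WeaklyLocallyCompactSpace X] [T2Space X] {K : Set X} (hK : IsCompact K) :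
    {C | IsUnboundedComponent X K C}.Finite := by
  rcases K.eq_empty_or_nonempty with rfl | hKne
  · refine (Set.finite_singleton Set.univ).subset ?_
    rintro C ⟨⟨x, -, rfl⟩, -⟩
    simp [connectedComponentIn_univ, PreconnectedSpace.connectedComponent_eq_univ]
  obtain ⟨K', hK', hKK'⟩ := exists_compact_superset hK
  have hfrontier : frontier K' ⊆ Kᶜ := fun y hy hyK => hy.2 (hKK' hyK)
  have hfrontierCompact : IsCompact (frontier K') :=
    hK'.of_isClosed_subset isClosed_frontier hK'.isClosed.frontier_subset
  refine (hfrontierCompact.finite_image_connectedComponentIn hK.isClosed.isOpen_compl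
    hfrontier).subset ?_
  intro C hC
  obtain ⟨z, hzC, hzK'⟩ := hC.inter_frontier_nonempty hK.isClosed hKne hK' hKK'
  exact ⟨z, hzK', (hC.eq_connectedComponentIn hzC).symm⟩

namespace Ends

theorem val_eq_of_subset {e e' : Ends X} {K K' : {K : Set X // IsCompact K}} (hKK' : K.1 ⊆ K'.1)
    (h : e.1 K' = e'.1 K') : e.1 K = e'.1 K := by
  obtain ⟨z, hz⟩ := (e.2.1 K').nonempty
  refine (e.2.1 K).eq_of_not_disjoint (e'.2.1 K) (Set.not_disjoint_iff.mpr ⟨z, ?_, ?_⟩)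
  · exact e.2.2 K K' hKK' hz
  · exact e'.2.2 K K' hKK' (h ▸ hz)

section DiscreteSets

local instance : TopologicalSpace (Set X) := ⊥

local instance : DiscreteTopology (Set X) := ⟨rfl⟩

theorem isClosedEmbedding_val :
    IsClosedEmbedding (Subtype.val : Ends X → ({K : Set X // IsCompact K} → Set X)) := by
  refine ⟨⟨⟨rfl⟩, Subtype.val_injective⟩, ?_⟩
  rw [Subtype.range_coe_subtype, Set.ofPred_and]
  simp only [Set.ofPred_forall]
  exact (isClosed_iInter fun K : {K : Set X // IsCompact K} =>
      (isClosed_discrete {C | IsUnboundedComponent X K.1 C}).preimage (continuous_apply K)).inter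
    (isClosed_iInter fun K => isClosed_iInter fun K' => isClosed_iInter fun _ =>
      (isClosed_discrete {p : Set X × Set X | p.1 ⊆ p.2}).preimage
        ((continuous_apply K').prodMk (continuous_apply K)))

theorem continuous_val_apply (K : {K : Set X // IsCompact K}) :
    Continuous fun e : Ends X => e.1 K :=
  (continuous_apply K).comp isClosedEmbedding_val.continuous

instance [PreconnectedSpace X] [LocallyConnectedSpace X] [WeaklyLocallyCompactSpace X]
    [T2Space X] : CompactSpace (Ends X) := by
  let S := Set.univ.pi fun K : {K : Set X // IsCompact K} => {C | IsUnboundedComponent X K.1 C}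
  have hcompact : IsCompact S :=
    isCompact_univ_pi fun K => (finite_setOf_isUnboundedComponent K.2).isCompact
  have hpreimage : (Subtype.val : Ends X → _) ⁻¹' S = Set.univ :=
    Set.eq_univ_of_forall fun e K _ => e.2.1 K
  exact isCompact_univ_iff.mp (hpreimage ▸ isClosedEmbedding_val.isCompact_preimage hcompact)

instance : T2Space (Ends X) :=
  isClosedEmbedding_val.isEmbedding.t2Space

instance : TotallyDisconnectedSpace (Ends X) :=
  isClosedEmbedding_val.isEmbedding.isTotallyDisconnected_range.mp
    (isTotallyDisconnected_of_totallyDisconnectedSpace _)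

theorem eq_of_forall_compactExhaustion (𝒦 : CompactExhaustion X) {e e' : Ends X}
    (h : ∀ n, e.1 ⟨𝒦 n, 𝒦.isCompact n⟩ = e'.1 ⟨𝒦 n, 𝒦.isCompact n⟩) : e = e' := by
  refine Subtype.ext (funext fun K => ?_)
  obtain ⟨n, hn⟩ := 𝒦.exists_superset_of_isCompact K.2
  exact val_eq_of_subset hn (h n)

instance [PreconnectedSpace X] [LocallyConnectedSpace X] [WeaklyLocallyCompactSpace X]
    [T2Space X] [SigmaCompactSpace X] : SecondCountableTopology (Ends X) := by
  let 𝒦 := CompactExhaustion.choice X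
  have : ∀ n, Finite {C // IsUnboundedComponent X (𝒦 n) C} := fun n =>
    (finite_setOf_isUnboundedComponent (𝒦.isCompact n)).to_subtype
  let restrict (e : Ends X) (n : ℕ) : {C // IsUnboundedComponent X (𝒦 n) C} :=
    ⟨e.1 ⟨𝒦 n, 𝒦.isCompact n⟩, e.2.1 ⟨𝒦 n, 𝒦.isCompact n⟩⟩
  have hcont : Continuous restrict :=
    continuous_pi fun n => (continuous_val_apply _).subtype_mk _
  have hinj : restrict.Injective := fun e e' h =>
    eq_of_forall_compactExhaustion 𝒦 fun n => congrArg Subtype.val (congrFun h n)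
  exact (hcont.isClosedEmbedding hinj).isEmbedding.secondCountableTopology

end DiscreteSets

end Ends

/-- Richards's theorem, point-set form: for `X` connected, locally connected, locally
compact and Hausdorff, the end space `Ends X` is compact, Hausdorff and totally
disconnected; if `X` is moreover second countable, so is `Ends X`. -/
theorem ends_compact_t2_totallyDisconnected [ConnectedSpace X] [LocallyConnectedSpace X]
    [LocallyCompactSpace X] [T2Space X] :
    CompactSpace (Ends X) ∧ T2Space (Ends X) ∧ TotallyDisconnectedSpace (Ends X) ∧
      (SecondCountableTopology X → SecondCountableTopology (Ends X)) :=
  ⟨inferInstance, inferInstance, inferInstance, fun _ => inferInstance⟩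
end

section
/- Let S be a Hausdorff topological space, let f : S → S be a homeomorphism, and let U ⊆ S be an open set with f(U) ⊆ U. Assume: (i) for every compact set C ⊆ S there exists N such that fⁿ(U) ∩ C = ∅ for all n ≥ N; and (ii) the closure D of U ∖ f(U) in S is compact and D ⊆ 𝒰, where 𝒰 := ⋃_{n ≥ 0} f⁻ⁿ(U). Then 𝒰 is open and f-invariant (f(𝒰) = 𝒰), the induced ℤ-action on 𝒰 given by n • x = fⁿ(x) is free and properly discontinuous (for any compact subsets K, L of 𝒰, the set of n ∈ ℤ with fⁿ(K) ∩ L ≠ ∅ is finite), and the action is cocompact: the translates {fⁿ(D)}_{n ∈ ℤ} cover 𝒰, so the quotient 𝒰/⟨f⟩ is compact. -/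
variable {S : Type*} [TopologicalSpace S]

/-- The `n`-th iterate of a homeomorphism `f`, as a map, for `n : ℤ`. -/
def zpowIter (f : S ≃ₜ S) (n : ℤ) : S → S := ⇑(f.toEquiv ^ n)

/-- The positive escaping set `𝒰 = ⋃_{n ≥ 0} f⁻ⁿ(U)`. -/
def posEscapingSet (f : S ≃ₜ S) (U : Set S) : Set S :=
  ⋃ n : ℕ, (⇑f)^[n] ⁻¹' U

lemma zpowIter_natCast (f : S ≃ₜ S) (n : ℕ) : zpowIter f (n : ℤ) = (⇑f)^[n] := by
  ext x
  simp [zpowIter, zpow_natCast, Equiv.Perm.coe_pow]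

lemma zpowIter_add_apply (f : S ≃ₜ S) (a b : ℤ) (x : S) :
    zpowIter f (a + b) x = zpowIter f a (zpowIter f b x) := by
  simp [zpowIter, zpow_add, Equiv.Perm.mul_apply]

lemma zpowIter_zero_apply (f : S ≃ₜ S) (x : S) : zpowIter f 0 x = x := by
  simp [zpowIter]

lemma mem_posEscapingSet {f : S ≃ₜ S} {U : Set S} {x : S} :
    x ∈ posEscapingSet f U ↔ ∃ n : ℕ, (⇑f)^[n] x ∈ U := by
  simp [posEscapingSet]

/-- Abstract form of Lemma 2.4 of Field–Kim–Leininger–Loving: if `U` is open with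
`f(U) ⊆ U`, every compact set is eventually disjoint from the iterates `fⁿ(U)`, and the
closure `D` of `U \ f(U)` is compact and contained in `𝒰 = ⋃_{n ≥ 0} f⁻ⁿ(U)`, then `𝒰` is
open and `f`-invariant, the induced ℤ-action on `𝒰` is free and properly discontinuous,
and the translates `fⁿ(D)` cover `𝒰`, so the quotient `𝒰/⟨f⟩` is compact. -/
theorem posEscapingSet_free_properlyDiscontinuous_cocompact
    [T2Space S] (f : S ≃ₜ S) (U : Set S) (hUopen : IsOpen U) (hfU : ⇑f '' U ⊆ U)
    (hexit : ∀ C : Set S, IsCompact C → ∃ N : ℕ, ∀ n ≥ N, (⇑f)^[n] '' U ∩ C = ∅)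
    (hDcpt : IsCompact (closure (U \ ⇑f '' U)))
    (hDsub : closure (U \ ⇑f '' U) ⊆ posEscapingSet f U) :
    IsOpen (posEscapingSet f U) ∧
    ⇑f '' posEscapingSet f U = posEscapingSet f U ∧
    (∀ (n : ℤ) (x : S), x ∈ posEscapingSet f U → zpowIter f n x = x → n = 0) ∧
    (∀ K L : Set S, K ⊆ posEscapingSet f U → L ⊆ posEscapingSet f U →
      IsCompact K → IsCompact L →
      {n : ℤ | (zpowIter f n '' K ∩ L).Nonempty}.Finite) ∧
    posEscapingSet f U ⊆ ⋃ n : ℤ, zpowIter f n '' closure (U \ ⇑f '' U) ∧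
    CompactSpace
      (Quot fun x y : posEscapingSet f U => ∃ n : ℤ, zpowIter f n x.1 = y.1) := by
  classical
  -- monotonicity of the stages
  have hstep : ∀ n : ℕ, (⇑f)^[n] ⁻¹' U ⊆ (⇑f)^[n + 1] ⁻¹' U := by
    intro n x hx
    simp only [Set.mem_preimage] at hx ⊢
    rw [Function.iterate_succ_apply']
    exact hfU ⟨_, hx, rfl⟩
  have hmono : Monotone fun n : ℕ => (⇑f)^[n] ⁻¹' U := monotone_nat_of_le_succ hstep
  -- openness
  have hopen : IsOpen (posEscapingSet f U) :=
    isOpen_iUnion fun n => hUopen.preimage (f.continuous.iterate n)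
  -- compact subsets of 𝒰 lie in one stage
  have hstage : ∀ K : Set S, IsCompact K → K ⊆ posEscapingSet f U →
      ∃ m : ℕ, ∀ x ∈ K, (⇑f)^[m] x ∈ U := by
    intro K hK hKU
    obtain ⟨m, hm⟩ := hK.elim_directed_cover _
      (fun n => hUopen.preimage (f.continuous.iterate n)) hKU hmono.directed_le
    exact ⟨m, fun x hx => hm hx⟩
  -- invariance
  have hinv : ⇑f '' posEscapingSet f U = posEscapingSet f U := by
    ext y
    simp only [Set.mem_image, mem_posEscapingSet]
    constructor
    · rintro ⟨x, ⟨n, hn⟩, rfl⟩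
      refine ⟨n, ?_⟩
      rw [← Function.iterate_succ_apply, Function.iterate_succ_apply']
      exact hfU ⟨_, hn, rfl⟩
    · rintro ⟨n, hn⟩
      refine ⟨f.symm y, ⟨n + 1, ?_⟩, f.apply_symm_apply y⟩
      rw [Function.iterate_succ_apply, f.apply_symm_apply]
      exact hn
  -- freeness
  have hfree : ∀ (n : ℤ) (x : S), x ∈ posEscapingSet f U → zpowIter f n x = x → n = 0 := by
    intro n x hx hfix
    by_contra hne
    obtain ⟨m, hm⟩ := mem_posEscapingSet.mp hx
    have key : ∀ p : ℕ, p ≠ 0 → (⇑f)^[p] x = x → False := by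
      intro p hp hpx
      obtain ⟨N, hN⟩ := hexit {(⇑f)^[m] x} isCompact_singleton
      have hper : (⇑f)^[p * (N + 1)] x = x := by
        rw [Function.iterate_mul]
        exact Function.iterate_fixed hpx _
      have hge : N ≤ p * (N + 1) := by
        have : 1 * (N + 1) ≤ p * (N + 1) :=
          Nat.mul_le_mul_right _ (Nat.one_le_iff_ne_zero.mpr hp)
        omega
      have hmem : (⇑f)^[m] x ∈ (⇑f)^[p * (N + 1)] '' U ∩ {(⇑f)^[m] x} := by
        refine ⟨⟨(⇑f)^[m] x, hm, ?_⟩, rfl⟩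
        rw [← Function.iterate_add_apply, Nat.add_comm, Function.iterate_add_apply, hper]
      rw [hN _ hge] at hmem
      exact hmem
    obtain ⟨p, rfl | rfl⟩ := n.eq_nat_or_neg
    · have hp : p ≠ 0 := by simpa using hne
      exact key p hp (by rwa [zpowIter_natCast] at hfix)
    · have hp : p ≠ 0 := by simpa using hne
      apply key p hp
      have h2 : zpowIter f ((p : ℤ) + -(p : ℤ)) x = zpowIter f (p : ℤ) x := by
        rw [zpowIter_add_apply, hfix]
      rw [add_neg_cancel, zpowIter_natCast] at h2
      rw [← h2]
      exact zpowIter_zero_apply f x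
  -- proper discontinuity
  have hpd : ∀ K L : Set S, K ⊆ posEscapingSet f U → L ⊆ posEscapingSet f U →
      IsCompact K → IsCompact L →
      {n : ℤ | (zpowIter f n '' K ∩ L).Nonempty}.Finite := by
    intro K L hKU hLU hK hL
    obtain ⟨m₁, hm₁⟩ := hstage K hK hKU
    obtain ⟨m₂, hm₂⟩ := hstage L hL hLU
    set m := max m₁ m₂ with hmdef
    have hmK : ∀ x ∈ K, (⇑f)^[m] x ∈ U := fun x hx =>
      hmono (le_max_left m₁ m₂) (hm₁ x hx)
    have hmL : ∀ x ∈ L, (⇑f)^[m] x ∈ U := fun x hx =>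
      hmono (le_max_right m₁ m₂) (hm₂ x hx)
    obtain ⟨N₁, hN₁⟩ := hexit ((⇑f)^[m] '' L) (hL.image (f.continuous.iterate m))
    obtain ⟨N₂, hN₂⟩ := hexit ((⇑f)^[m] '' K) (hK.image (f.continuous.iterate m))
    apply Set.Finite.subset (Set.finite_Icc (-(N₂ : ℤ)) (N₁ : ℤ))
    rintro n ⟨y, ⟨k, hk, rfl⟩, hyL⟩
    simp only [Set.mem_Icc]
    obtain ⟨p, rfl | rfl⟩ := n.eq_nat_or_neg
    · rw [zpowIter_natCast] at hyL
      refine ⟨le_trans (neg_nonpos.mpr (Int.natCast_nonneg _)) (Int.natCast_nonneg _), ?_⟩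
      by_contra hgt
      push_neg at hgt
      have hp : N₁ ≤ p := by exact_mod_cast hgt.le
      have hmem : (⇑f)^[m] ((⇑f)^[p] k) ∈ (⇑f)^[p] '' U ∩ (⇑f)^[m] '' L := by
        refine ⟨⟨(⇑f)^[m] k, hmK k hk, ?_⟩, ⟨(⇑f)^[p] k, hyL, rfl⟩⟩
        rw [← Function.iterate_add_apply, ← Function.iterate_add_apply, Nat.add_comm]
      rw [hN₁ p hp] at hmem
      exact hmem
    · refine ⟨?_, le_trans (by simp) (Int.natCast_nonneg N₁)⟩
      by_contra hgt
      push_neg at hgt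
      have hp : N₂ ≤ p := by
        have := neg_lt_neg hgt
        simp only [neg_neg] at this
        exact_mod_cast this.le
      have hl : (⇑f)^[p] (zpowIter f (-(p : ℤ)) k) = k := by
        rw [← zpowIter_natCast, ← zpowIter_add_apply, add_neg_cancel]
        exact zpowIter_zero_apply f k
      have hmem : (⇑f)^[m] k ∈ (⇑f)^[p] '' U ∩ (⇑f)^[m] '' K := by
        refine ⟨⟨(⇑f)^[m] (zpowIter f (-(p : ℤ)) k), hmL _ hyL, ?_⟩, ⟨k, hk, rfl⟩⟩
        rw [← Function.iterate_add_apply, Nat.add_comm, Function.iterate_add_apply, hl]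
      rw [hN₂ p hp] at hmem
      exact hmem
  -- cocompactness: the translates of D cover 𝒰
  have hcover : posEscapingSet f U ⊆ ⋃ n : ℤ, zpowIter f n '' closure (U \ ⇑f '' U) := by
    intro x hx
    obtain ⟨m, hm⟩ := mem_posEscapingSet.mp hx
    obtain ⟨N, hN⟩ := hexit {(⇑f)^[m] x} isCompact_singleton
    set P : ℕ → Prop := fun n => (⇑f)^[m] x ∈ (⇑f)^[n] '' U with hPdef
    have hP0 : P 0 := by
      simpa [P] using hm
    set k := Nat.findGreatest P N with hkdef
    have hPk : P k := Nat.findGreatest_spec (Nat.zero_le N) hP0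
    have hPk1 : ¬ P (k + 1) := by
      rcases le_or_gt (k + 1) N with h | h
      · exact Nat.findGreatest_is_greatest (Nat.lt_succ_self k) h
      · intro hc
        have hmem : (⇑f)^[m] x ∈ (⇑f)^[k + 1] '' U ∩ {(⇑f)^[m] x} := ⟨hc, rfl⟩
        rw [hN _ (by omega)] at hmem
        exact hmem
    obtain ⟨u, hu, huk⟩ := hPk
    have huD : u ∈ closure (U \ ⇑f '' U) := by
      apply subset_closure
      refine ⟨hu, fun hmemf => hPk1 ?_⟩
      obtain ⟨v, hv, hvu⟩ := hmemf
      exact ⟨v, hv, by rw [Function.iterate_succ_apply, hvu, huk]⟩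
    have hzero : zpowIter f (-(m : ℤ)) ((⇑f)^[k] u) = x := by
      have h2 : zpowIter f (-(m : ℤ) + m) x = zpowIter f (-(m : ℤ)) ((⇑f)^[k] u) := by
        rw [zpowIter_add_apply, zpowIter_natCast, huk]
      rw [neg_add_cancel, zpowIter_zero_apply] at h2
      exact h2.symm
    refine Set.mem_iUnion.mpr ⟨(k : ℤ) - m, u, huD, ?_⟩
    calc zpowIter f ((k : ℤ) - m) u
        = zpowIter f (-(m : ℤ) + k) u := by rw [sub_eq_add_neg, add_comm]
      _ = zpowIter f (-(m : ℤ)) (zpowIter f (k : ℤ) u) := zpowIter_add_apply f _ _ u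
      _ = zpowIter f (-(m : ℤ)) ((⇑f)^[k] u) := by rw [zpowIter_natCast]
      _ = x := hzero
  -- compactness of the quotient
  have hQ : CompactSpace
      (Quot fun x y : posEscapingSet f U => ∃ n : ℤ, zpowIter f n x.1 = y.1) := by
    set r : posEscapingSet f U → posEscapingSet f U → Prop :=
      fun x y => ∃ n : ℤ, zpowIter f n x.1 = y.1 with hrdef
    have : CompactSpace (closure (U \ ⇑f '' U)) := isCompact_iff_compactSpace.mp hDcpt
    let g : closure (U \ ⇑f '' U) → Quot r :=
      fun d => Quot.mk r ⟨d.1, hDsub d.2⟩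
    have hgc : Continuous g :=
      continuous_quot_mk.comp (Continuous.subtype_mk continuous_subtype_val _)
    have hgs : Function.Surjective g := by
      intro q
      obtain ⟨x, rfl⟩ := Quot.exists_rep q
      obtain ⟨n, hn⟩ := Set.mem_iUnion.mp (hcover x.2)
      obtain ⟨d, hd, hdx⟩ := hn
      exact ⟨⟨d, hd⟩, Quot.sound ⟨n, hdx⟩⟩
    constructor
    rw [← Set.range_eq_univ.mpr hgs]
    exact isCompact_range hgc
  exact ⟨hopen, hinv, hfree, hpd, hcover, hQ⟩
end
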